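/- For all positive integers i and j, Σ_{m=1}^∞ (−1)^{v₂(i)+v₂(m)} α(i,m) α(m,j) equals 1 if i = j and 0 otherwise (the sum is finite, since α(i,m) = 0 for m < i and α(m,j) = 0 for m > j). Equivalently, the inverse of the matrix Z = (α(i,j)) is X·Z·X, where X is the diagonal matrix with (i,i) entry (−1)^{v₂(i)}. -/

import Mathlib

/-!
Put `f = ζ - 1` in the Dirichlet ring `ArithmeticFunction ℤ`. Then `α_k = f ^ k`, so row
`i = 2 ^ k * d` (`d` odd) of `Z` is `Φ i = f ^ k * δ_d`, and `Φ` is multiplicative in `i`. So is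
`Ψ m = (-1) ^ v₂(m) • Φ m = (-f) ^ v₂(m) * δ_{odd part of m}`, and `Ψ m` vanishes below `m`;
hence `S F = ∑ₘ F m • Ψ m` is a ring endomorphism of the Dirichlet ring, and the theorem says
`S (Φ i) = (-1) ^ v₂(i) • δ_i`. Now `S` fixes `δ_d` for odd `d` and `S δ_2 = Ψ 2 = -f`. The
indicator `ζ * (1 - δ_2)` of the odd numbers is fixed by `S`, while its image is
`S ζ * (1 + f) = S ζ * ζ`; Möbius inversion gives `S ζ = 1 - δ_2`, i.e. `S f = -δ_2`. Therefore
`S (Φ i) = (-δ_2) ^ k * δ_d = (-1) ^ k • δ_i`.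
Below, `δ_b` is `delta b`, `Φ` and `Ψ` are `twoAdicRow f` and `twoAdicRow (-f)`, and `S` is
`signedSubst`.
-/

/-- `alpha k m` is the number of `k`-tuples `(m₁, …, m_k)` of integers, each `≥ 2`,
whose product is `m`. -/
noncomputable def alpha (k m : ℕ) : ℕ :=
  Nat.card {f : Fin k → ℕ // (∀ i, 2 ≤ f i) ∧ ∏ i, f i = m}

/-- The 2-adic valuation `v₂(i)`. -/
def v2 (i : ℕ) : ℕ := i.factorization 2

/-- The `(i,j)` entry `α(i,j)` of the matrix `Z`: writing `i = 2^k · d` with `d` odd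
(`k = v₂(i)`), `α(i,j) = δ_{i,j}` if `k = 0`, and for `k ≥ 1`, `α(i,j) = α_k(j/d)`
if `d ∣ j` and `0` otherwise. -/
noncomputable def alphaEnt (i j : ℕ) : ℕ :=
  if v2 i = 0 then (if i = j then 1 else 0)
  else if (i / 2 ^ v2 i) ∣ j then alpha (v2 i) (j / (i / 2 ^ v2 i))
  else 0

open ArithmeticFunction Finset
open scoped ArithmeticFunction.zeta ArithmeticFunction.Moebius

namespace ArithmeticFunction

variable {R : Type*} [CommRing R]

def delta (b : ℕ) : ArithmeticFunction R :=
  ⟨fun n => if n = b ∧ b ≠ 0 then 1 else 0, by simp; omega⟩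

lemma delta_apply {b : ℕ} (hb : b ≠ 0) (n : ℕ) :
    (delta b : ArithmeticFunction R) n = if n = b then 1 else 0 := by
  simp [delta, hb]

@[simp]
lemma delta_zero : (delta 0 : ArithmeticFunction R) = 0 := by
  ext n; simp [delta]

@[simp]
lemma delta_one : (delta 1 : ArithmeticFunction R) = 1 := by
  ext n; simp [delta_apply one_ne_zero, one_apply]

lemma mul_delta_apply (F : ArithmeticFunction R) {b : ℕ} (hb : b ≠ 0) (n : ℕ) :
    (F * delta b : ArithmeticFunction R) n = if b ∣ n then F (n / b) else 0 := by
  rcases eq_or_ne n 0 with rfl | hn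
  · simp
  rw [mul_apply, Nat.sum_divisorsAntidiagonal' (fun x y => F x * delta b y)]
  simp only [delta_apply hb, mul_ite, mul_one, mul_zero, sum_ite_eq', Nat.mem_divisors, ne_eq, hn,
    not_false_eq_true, and_true]

lemma delta_mul_delta (a b : ℕ) :
    (delta a * delta b : ArithmeticFunction R) = delta (a * b) := by
  rcases eq_or_ne a 0 with rfl | ha
  · simp
  rcases eq_or_ne b 0 with rfl | hb
  · simp
  ext n
  rw [mul_delta_apply _ hb, delta_apply (mul_ne_zero ha hb)]
  by_cases hbn : b ∣ n
  · simp only [hbn, if_true, delta_apply ha, Nat.div_eq_iff_eq_mul_left (Nat.pos_of_ne_zero hb) hbn]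
  · rw [if_neg hbn, if_neg fun h : n = a * b => hbn (h ▸ dvd_mul_left b a)]

lemma delta_pow (b k : ℕ) : (delta b : ArithmeticFunction R) ^ k = delta (b ^ k) := by
  induction k with
  | zero => simp
  | succ k ih => rw [pow_succ, ih, delta_mul_delta, pow_succ]

lemma pow_apply_eq_zero_of_lt_two_pow {f : ArithmeticFunction R} (hf : f 1 = 0) {k n : ℕ}
    (hn : n < 2 ^ k) : (f ^ k) n = 0 := by
  induction k generalizing n with
  | zero => simp [show n = 0 by omega]
  | succ k ih =>
    rw [pow_succ, mul_apply]
    refine sum_eq_zero fun p hp => ?_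
    obtain ⟨hpn, -⟩ := Nat.mem_divisorsAntidiagonal.mp hp
    rcases lt_or_ge p.2 2 with hp2 | hp2
    · obtain h | h : p.2 = 0 ∨ p.2 = 1 := by omega
      all_goals simp [h, hf]
    · have : p.1 * 2 < 2 ^ k * 2 := by
        calc p.1 * 2 ≤ n := hpn ▸ Nat.mul_le_mul_left _ hp2
          _ < 2 ^ k * 2 := pow_succ 2 k ▸ hn
      rw [ih (by omega), zero_mul]

def twoAdicRow (f : ArithmeticFunction R) : ℕ →* ArithmeticFunction R where
  toFun n := f ^ n.factorization 2 * delta (ordCompl[2] n)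
  map_one' := by simp
  map_mul' x y := by
    rcases eq_or_ne x 0 with rfl | hx
    · simp
    rcases eq_or_ne y 0 with rfl | hy
    · simp
    rw [Nat.ordCompl_mul, Nat.factorization_mul hx hy, ← delta_mul_delta]
    simp only [Finsupp.add_apply, pow_add]
    ring

lemma twoAdicRow_apply (f : ArithmeticFunction R) (n : ℕ) :
    twoAdicRow f n = f ^ n.factorization 2 * delta (ordCompl[2] n) := rfl

lemma twoAdicRow_of_not_two_dvd (f : ArithmeticFunction R) {b : ℕ} (hb : ¬ 2 ∣ b) :
    twoAdicRow f b = delta b := by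
  simp [twoAdicRow_apply, Nat.factorization_eq_zero_of_not_dvd hb]

lemma twoAdicRow_two (f : ArithmeticFunction R) : twoAdicRow f 2 = f := by
  simp [twoAdicRow_apply, Nat.prime_two.factorization_self]

lemma twoAdicRow_delta_two (n : ℕ) : twoAdicRow (delta 2 : ArithmeticFunction R) n = delta n := by
  rw [twoAdicRow_apply, delta_pow, delta_mul_delta, Nat.ordProj_mul_ordCompl_eq_self]

lemma twoAdicRow_apply_eq_zero_of_lt {f : ArithmeticFunction R} (hf : f 1 = 0) {m n : ℕ}
    (hnm : n < m) : twoAdicRow f m n = 0 := by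
  have hd : ordCompl[2] m ≠ 0 := (Nat.ordCompl_pos 2 (by omega)).ne'
  rw [twoAdicRow_apply, mul_delta_apply _ hd]
  split_ifs
  · refine pow_apply_eq_zero_of_lt_two_pow hf ?_
    rw [Nat.div_lt_iff_lt_mul (Nat.pos_of_ne_zero hd), Nat.ordProj_mul_ordCompl_eq_self]
    exact hnm
  · rfl

lemma twoAdicRow_neg_apply (f : ArithmeticFunction R) (m n : ℕ) :
    twoAdicRow (-f) m n = (-1) ^ m.factorization 2 * twoAdicRow f m n := by
  simp only [twoAdicRow_apply]
  rcases Nat.even_or_odd (m.factorization 2) with h | h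
  · rw [h.neg_pow, h.neg_one_pow, one_mul]
  · rw [h.neg_pow, h.neg_one_pow, neg_mul, neg_apply, neg_one_mul]

lemma map_twoAdicRow (φ : ArithmeticFunction R →+* ArithmeticFunction R)
    (hφ : ∀ b, ¬ 2 ∣ b → φ (delta b) = delta b) (f : ArithmeticFunction R) {n : ℕ} (hn : n ≠ 0) :
    φ (twoAdicRow f n) = twoAdicRow (φ f) n := by
  rw [twoAdicRow_apply, twoAdicRow_apply, map_mul, map_pow,
    hφ _ (Nat.not_dvd_ordCompl Nat.prime_two hn)]

section Subst

variable (Ψ : ℕ →* ArithmeticFunction R) (hΨ : ∀ {m n}, n < m → Ψ m n = 0)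

/-- `∑ₘ F m • Ψ m`, truncated at each `n` to `m ≤ n`: exact when `Ψ m n = 0` for `m > n`. -/
def subst (F : ArithmeticFunction R) : ArithmeticFunction R :=
  ⟨fun n => ∑ m ∈ Ioc 0 n, F m * Ψ m n, by simp⟩

lemma subst_apply (F : ArithmeticFunction R) (n : ℕ) :
    subst Ψ F n = ∑ m ∈ Ioc 0 n, F m * Ψ m n := rfl

include hΨ in
lemma subst_apply_eq_sum_Ioc (F : ArithmeticFunction R) {n N : ℕ} (hN : n ≤ N) :
    subst Ψ F n = ∑ m ∈ Ioc 0 N, F m * Ψ m n := by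
  refine sum_subset (Ioc_subset_Ioc_right hN) fun m hm hmn => ?_
  rw [hΨ (by simp_all), mul_zero]

include hΨ in
lemma subst_mul (F G : ArithmeticFunction R) : subst Ψ (F * G) = subst Ψ F * subst Ψ G := by
  ext n
  let g : ℕ × ℕ → R := fun x => F x.1 * G x.2 * Ψ (x.1 * x.2) n
  have lhs : subst Ψ (F * G) n = ∑ x ∈ Ioc 0 n ×ˢ Ioc 0 n, g x := by
    calc subst Ψ (F * G) n
        = ∑ m ∈ Ioc 0 n, ∑ x ∈ (Ioc 0 n ×ˢ Ioc 0 n : Finset (ℕ × ℕ)) with x.1 * x.2 = m, g x := by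
          refine (subst_apply Ψ _ n).trans (sum_congr rfl fun m hm => ?_)
          rw [mem_Ioc] at hm
          rw [mul_apply, sum_mul, Nat.divisorsAntidiagonal_eq_prod_filter_of_le hm.1.ne' hm.2]
          exact sum_congr rfl fun x hx => by simp only [g, (mem_filter.mp hx).2]
      _ = ∑ x ∈ (Ioc 0 n ×ˢ Ioc 0 n : Finset (ℕ × ℕ)) with x.1 * x.2 ∈ Ioc 0 n, g x :=
          sum_fiberwise_eq_sum_filter _ _ (fun x : ℕ × ℕ => x.1 * x.2) g
      _ = ∑ x ∈ Ioc 0 n ×ˢ Ioc 0 n, g x := by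
          refine sum_filter_of_ne fun x hx hgx => ?_
          simp only [mem_product, mem_Ioc] at hx ⊢
          refine ⟨Nat.mul_pos hx.1.1 hx.2.1, not_lt.mp fun h => hgx ?_⟩
          simp only [g, hΨ h, mul_zero]
  rw [lhs, mul_apply, eq_comm]
  calc ∑ p ∈ n.divisorsAntidiagonal, subst Ψ F p.1 * subst Ψ G p.2
      = ∑ p ∈ n.divisorsAntidiagonal, ∑ x ∈ Ioc 0 n ×ˢ Ioc 0 n,
          F x.1 * Ψ x.1 p.1 * (G x.2 * Ψ x.2 p.2) := by
        refine sum_congr rfl fun p hp => ?_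
        have hp1 := Nat.divisor_le (Nat.fst_mem_divisors_of_mem_antidiagonal hp)
        have hp2 := Nat.divisor_le (Nat.snd_mem_divisors_of_mem_antidiagonal hp)
        rw [subst_apply_eq_sum_Ioc Ψ hΨ F hp1, subst_apply_eq_sum_Ioc Ψ hΨ G hp2, sum_mul_sum,
          ← sum_product']
    _ = ∑ x ∈ Ioc 0 n ×ˢ Ioc 0 n, g x := by
        rw [sum_comm]
        refine sum_congr rfl fun x _ => ?_
        simp only [g, map_mul, mul_apply, mul_sum]
        exact sum_congr rfl fun p _ => by ring

def substHom : ArithmeticFunction R →+* ArithmeticFunction R where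
  toFun := subst Ψ
  map_zero' := by ext n; simp [subst_apply]
  map_add' F G := by ext n; simp [subst_apply, add_mul, sum_add_distrib]
  map_one' := by
    ext n
    rcases eq_or_ne n 0 with rfl | hn
    · simp
    simp [subst_apply, one_apply, Nat.one_le_iff_ne_zero.mpr hn]
  map_mul' := subst_mul Ψ hΨ

lemma substHom_apply (F : ArithmeticFunction R) (n : ℕ) :
    substHom Ψ hΨ F n = ∑ m ∈ Ioc 0 n, F m * Ψ m n := rfl

lemma substHom_delta {b : ℕ} (hb : b ≠ 0) : substHom Ψ hΨ (delta b) = Ψ b := by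
  ext n
  simp only [substHom_apply, delta_apply hb, ite_mul, one_mul, zero_mul, sum_ite_eq', mem_Ioc]
  split_ifs with h
  · rfl
  · exact (hΨ (by omega)).symm

lemma substHom_eq_self {F : ArithmeticFunction R} (hF : ∀ m, F m ≠ 0 → Ψ m = delta m) :
    substHom Ψ hΨ F = F := by
  ext n
  have hterm : ∀ m ∈ Ioc 0 n, F m * Ψ m n = if n = m then F n else 0 := by
    intro m hm
    by_cases hFm : F m = 0
    · split_ifs with h <;> simp [hFm, h]
    · rw [hF m hFm, delta_apply (mem_Ioc.mp hm).1.ne']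
      split_ifs with h <;> simp [h]
  rw [substHom_apply, sum_congr rfl hterm, sum_ite_eq]
  split_ifs with h
  · rfl
  · rw [show n = 0 by simp at h; omega, map_zero]

end Subst

end ArithmeticFunction

abbrev OrderedFactorization (k M : ℕ) := {f : Fin k → ℕ // (∀ i, 2 ≤ f i) ∧ ∏ i, f i = M}

namespace OrderedFactorization

lemma prod_ne_zero {k M : ℕ} (x : OrderedFactorization k M) : M ≠ 0 :=
  x.2.2 ▸ Finset.prod_ne_zero_iff.2 fun i _ => by have := x.2.1 i; omega

instance (k M : ℕ) : Finite (OrderedFactorization k M) :=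
  Finite.of_injective (β := Nat.finMulAntidiag k M)
    (fun x : OrderedFactorization k M => ⟨x.1, Nat.mem_finMulAntidiag.2 ⟨x.2.2, x.prod_ne_zero⟩⟩)
    fun _ _ h => Subtype.ext <| by injection h

def consEquiv (k M : ℕ) :
    OrderedFactorization (k + 1) M ≃
      Σ p : {p ∈ M.divisorsAntidiagonal | 2 ≤ p.1}, OrderedFactorization k p.1.2 where
  toFun x := ⟨⟨(x.1 0, ∏ i : Fin k, x.1 i.succ), mem_filter.2
      ⟨Nat.mem_divisorsAntidiagonal.2 ⟨(Fin.prod_univ_succ x.1).symm.trans x.2.2, x.prod_ne_zero⟩,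
        x.2.1 0⟩⟩, ⟨Fin.tail x.1, fun i => x.2.1 i.succ, rfl⟩⟩
  invFun y := ⟨Fin.cons y.1.1.1 y.2.1, Fin.forall_fin_succ.2 ⟨(mem_filter.1 y.1.2).2, y.2.2.1⟩, by
    rw [Fin.prod_univ_succ, Fin.cons_zero]
    simp only [Fin.cons_succ, y.2.2.2]
    exact (Nat.mem_divisorsAntidiagonal.1 (mem_filter.1 y.1.2).1).1⟩
  left_inv x := Subtype.ext (Fin.cons_self_tail x.1)
  right_inv y := Sigma.subtype_ext (Subtype.ext (Prod.ext rfl y.2.2.2)) rfl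

end OrderedFactorization

lemma alpha_zero (M : ℕ) : alpha 0 M = if M = 1 then 1 else 0 := by
  by_cases h : M = 1 <;> simp [alpha, h, eq_comm]

lemma alpha_succ (k M : ℕ) :
    alpha (k + 1) M = ∑ p ∈ M.divisorsAntidiagonal with 2 ≤ p.1, alpha k p.2 := by
  rw [alpha, Nat.card_congr (OrderedFactorization.consEquiv k M), Nat.card_sigma]
  exact sum_coe_sort _ fun p : ℕ × ℕ => alpha k p.2

lemma zeta_sub_one_apply (n : ℕ) : (ζ - 1 : ArithmeticFunction ℤ) n = if 2 ≤ n then 1 else 0 := by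
  rcases n with _ | _ | n <;> simp [sub_eq_add_neg, one_apply]

lemma alpha_eq_zeta_sub_one_pow_apply (k M : ℕ) :
    (alpha k M : ℤ) = ((ζ - 1 : ArithmeticFunction ℤ) ^ k) M := by
  induction k generalizing M with
  | zero => simp [alpha_zero, one_apply]
  | succ k ih =>
    simp only [alpha_succ, pow_succ', mul_apply, zeta_sub_one_apply, ite_mul, one_mul, zero_mul,
      sum_filter, ← ih]
    push_cast
    rfl

lemma signedRow_apply_eq_zero_of_lt {m n : ℕ} (hnm : n < m) :
    twoAdicRow (-(ζ - 1) : ArithmeticFunction ℤ) m n = 0 :=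
  twoAdicRow_apply_eq_zero_of_lt
    (by rw [ArithmeticFunction.neg_apply, zeta_sub_one_apply]; simp) hnm

noncomputable abbrev signedSubst : ArithmeticFunction ℤ →+* ArithmeticFunction ℤ :=
  substHom (twoAdicRow (-(ζ - 1))) signedRow_apply_eq_zero_of_lt

lemma signedSubst_delta {b : ℕ} (hb : ¬ 2 ∣ b) : signedSubst (delta b) = delta b := by
  rw [substHom_delta _ _ (by omega), twoAdicRow_of_not_two_dvd _ hb]

lemma zeta_mul_one_sub_delta_two_apply_of_two_dvd {m : ℕ} (hm : 2 ∣ m) :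
    (ζ * (1 - delta 2 : ArithmeticFunction ℤ) : ArithmeticFunction ℤ) m = 0 := by
  rcases eq_or_ne m 0 with rfl | hm0
  · simp
  rw [mul_sub, mul_one, sub_eq_add_neg, ArithmeticFunction.add_apply, ArithmeticFunction.neg_apply,
    mul_delta_apply _ two_ne_zero, if_pos hm, natCoe_apply, natCoe_apply, zeta_apply_ne hm0,
    zeta_apply_ne (by omega)]
  simp

lemma signedSubst_zeta : signedSubst ζ = 1 - delta 2 := by
  have hodd : signedSubst (ζ * (1 - delta 2 : ArithmeticFunction ℤ))
      = (ζ : ArithmeticFunction ℤ) * (1 - delta 2) :=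
    substHom_eq_self _ _ fun m hm => twoAdicRow_of_not_two_dvd _ fun h2 =>
      hm (zeta_mul_one_sub_delta_two_apply_of_two_dvd h2)
  calc signedSubst ζ = signedSubst ζ * ζ * μ := by rw [mul_assoc, coe_zeta_mul_moebius, mul_one]
    _ = signedSubst (ζ * (1 - delta 2 : ArithmeticFunction ℤ)) * μ := by
        rw [map_mul, map_sub, map_one, substHom_delta _ _ two_ne_zero, twoAdicRow_two,
          sub_neg_eq_add, add_sub_cancel]
    _ = 1 - delta 2 := by rw [hodd, mul_right_comm, coe_zeta_mul_moebius, one_mul]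

lemma signedSubst_twoAdicRow_apply {n : ℕ} (hn : n ≠ 0) (j : ℕ) :
    signedSubst (twoAdicRow (ζ - 1 : ArithmeticFunction ℤ) n) j
      = (-1) ^ n.factorization 2 * delta n j := by
  rw [map_twoAdicRow _ (fun b => signedSubst_delta) _ hn, map_sub, map_one, signedSubst_zeta,
    sub_sub_cancel_left, twoAdicRow_neg_apply, twoAdicRow_delta_two]

lemma alphaEnt_eq_twoAdicRow {i : ℕ} (hi : i ≠ 0) (n : ℕ) :
    (alphaEnt i n : ℤ) = twoAdicRow (ζ - 1 : ArithmeticFunction ℤ) i n := by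
  unfold alphaEnt v2
  by_cases h : i.factorization 2 = 0
  · simp [twoAdicRow_apply, h, delta_apply hi, eq_comm]
  · have hd : ordCompl[2] i ≠ 0 := (Nat.ordCompl_pos 2 hi).ne'
    rw [if_neg h, twoAdicRow_apply, mul_delta_apply _ hd]
    split_ifs <;> simp [alpha_eq_zeta_sub_one_pow_apply]

theorem stmt8_general (i j : ℕ) (hi : 0 < i) :
    ∑ m ∈ Finset.Icc i j,
        (-1 : ℤ) ^ (v2 i + v2 m) * (alphaEnt i m : ℤ) * (alphaEnt m j : ℤ)
      = if i = j then 1 else 0 := by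
  have hterm : ∀ m ∈ Icc i j, (-1 : ℤ) ^ (v2 i + v2 m) * alphaEnt i m * alphaEnt m j
      = (-1) ^ v2 i * (twoAdicRow (ζ - 1 : ArithmeticFunction ℤ) i m
          * twoAdicRow (-(ζ - 1) : ArithmeticFunction ℤ) m j) := fun m hm => by
    rw [alphaEnt_eq_twoAdicRow hi.ne', alphaEnt_eq_twoAdicRow (by simp at hm; omega),
      twoAdicRow_neg_apply, pow_add]
    unfold v2
    ring
  have hext : ∑ m ∈ Icc i j, twoAdicRow (ζ - 1 : ArithmeticFunction ℤ) i m
        * twoAdicRow (-(ζ - 1) : ArithmeticFunction ℤ) m j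
      = signedSubst (twoAdicRow (ζ - 1 : ArithmeticFunction ℤ) i) j := by
    rw [substHom_apply]
    refine sum_subset (fun m hm => by simp at hm ⊢; omega) fun m hm hmi => ?_
    rw [twoAdicRow_apply_eq_zero_of_lt (by rw [zeta_sub_one_apply]; simp)
      (by simp at hm hmi; omega), zero_mul]
  rw [sum_congr rfl hterm, ← mul_sum, hext, signedSubst_twoAdicRow_apply hi.ne', delta_apply hi.ne',
    ← mul_assoc, v2, ← pow_add, Even.neg_one_pow ⟨_, rfl⟩, one_mul]
  exact if_congr eq_comm rfl rfl

/-- `Z⁻¹ = X · Z · X` where `X = diag((-1)^{v₂(i)})`: the sum over all `m ∈ ℕ⁺` of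
`(-1)^{v₂(i)+v₂(m)} α(i,m) α(m,j)` is `δ_{i,j}`; the sum is finite since
`α(i,m) = 0` for `m < i` and `α(m,j) = 0` for `m > j`, so it may be taken
over `i ≤ m ≤ j`. -/
theorem stmt8 (i j : ℕ) (hi : 0 < i) (hj : 0 < j) :
    ∑ m ∈ Finset.Icc i j,
        (-1 : ℤ) ^ (v2 i + v2 m) * (alphaEnt i m : ℤ) * (alphaEnt m j : ℤ)
      = if i = j then 1 else 0 :=
  stmt8_general i j hi
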